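/- arXiv:1010.0232 — 3 statements merged into one kernel-verified Lean document; each statement's English description precedes it below -/
import Mathlib

section
/- For each 1 ≤ k ≤ N let c_k(x) denote the sequence (x_2, x_3, …, x_k, x_1, x_{k+1}, …, x_N) obtained by moving x_1 to position k. Then ∑_{k=1}^{N} f(c_k(x)) = f(x_1,…,x_N) · (∑_{i=1}^{N} x_i) / x_1. -/
/-!
Write `T p = ∑_{i=p}^{N} x_i`. The tail sums of `c_k(x)` are `x_1 + T (p + 1)` for `p ≤ k` and
`T p` for `p > k`, so `f(c_k(x)) = ∏_{p ≤ k} (x_1 + T (p + 1))⁻¹ * ∏_{k < p ≤ N} (T p)⁻¹`.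
The identity then holds with any sequence `T` and any constant `c` in place of `x_1`, by induction
on `N`: a new last index multiplies every old summand by `(T (N + 1))⁻¹` and adds one summand, and
`(c + T (N + 2)) - c = T (N + 2)` recombines the boundary terms. For the actual tail sums the
boundary term carries the factor `T (N + 1) = 0`.
-/

open Finset

noncomputable section

/-- `tailProdInv N y = ∏_{p=1}^{N} (∑_{i=p}^{N} y_i)⁻¹`, the function `f` of the identity. -/
def tailProdInv {K : Type*} [Field K] (N : ℕ) (y : ℕ → K) : K :=
  ∏ p ∈ Finset.Icc 1 N, (∑ i ∈ Finset.Icc p N, y i)⁻¹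

/-- `moveToFront x k = (x_2, x_3, …, x_k, x_1, x_{k+1}, …, x_N)`: the sequence obtained from
`(x_1, …, x_N)` by moving `x_1` to position `k`. -/
def moveToFront {K : Type*} [Field K] (x : ℕ → K) (k : ℕ) : ℕ → K :=
  fun i => if i < k then x (i + 1) else if i = k then x 1 else x i

theorem mul_sum_prod_inv_add_succ_mul_prod_inv {K : Type*} [Field K] (c : K) (T : ℕ → K) (N : ℕ)
    (hT : ∀ p ∈ Ioc 0 N, T p ≠ 0) (hS : ∀ p ∈ Ioc 0 N, c + T (p + 1) ≠ 0) :
    c * ∑ k ∈ Ioc 0 N, (∏ p ∈ Ioc 0 k, (c + T (p + 1))⁻¹) * ∏ p ∈ Ioc k N, (T p)⁻¹ =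
      T 1 * ∏ p ∈ Ioc 0 N, (T p)⁻¹ - T (N + 1) * ∏ p ∈ Ioc 0 N, (c + T (p + 1))⁻¹ := by
  induction N with
  | zero => simp
  | succ N ih =>
    have hT_last : T (N + 1) ≠ 0 := hT _ (by simp)
    have hS_last : c + T (N + 2) ≠ 0 := hS _ (by simp)
    specialize ih (fun p hp => hT p (Ioc_subset_Ioc_right N.le_succ hp))
      (fun p hp => hS p (Ioc_subset_Ioc_right N.le_succ hp))
    have hsplit : ∀ k ∈ Ioc 0 N,
        (∏ p ∈ Ioc 0 k, (c + T (p + 1))⁻¹) * ∏ p ∈ Ioc k (N + 1), (T p)⁻¹ =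
          (∏ p ∈ Ioc 0 k, (c + T (p + 1))⁻¹) * (∏ p ∈ Ioc k N, (T p)⁻¹) * (T (N + 1))⁻¹ :=
      fun k hk => by rw [prod_Ioc_succ_top (mem_Ioc.1 hk).2, mul_assoc]
    rw [sum_Ioc_succ_top N.zero_le, sum_congr rfl hsplit, ← sum_mul, Ioc_self, prod_empty,
      mul_one, prod_Ioc_succ_top N.zero_le, prod_Ioc_succ_top N.zero_le, mul_add, ← mul_assoc, ih]
    field_simp
    ring

section MoveToFront

variable {K : Type*} [Field K] (x : ℕ → K) {p k N : ℕ}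

theorem sum_Icc_moveToFront_of_lt (hkp : k < p) :
    ∑ i ∈ Icc p N, moveToFront x k i = ∑ i ∈ Icc p N, x i :=
  sum_congr rfl fun i hi => by
    have := (mem_Icc.1 hi).1
    simp only [moveToFront, if_neg (show ¬i < k by omega), if_neg (show i ≠ k by omega)]

theorem sum_Icc_moveToFront_of_le (hpk : p ≤ k) (hkN : k ≤ N) :
    ∑ i ∈ Icc p N, moveToFront x k i = x 1 + ∑ i ∈ Icc (p + 1) N, x i := by
  induction hpk using Nat.decreasingInduction with
  | self =>
    rw [← add_sum_Ioc_eq_sum_Icc hkN, ← Icc_add_one_left_eq_Ioc,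
      sum_Icc_moveToFront_of_lt x k.lt_add_one]
    simp [moveToFront]
  | of_succ p hpk ih =>
    rw [← add_sum_Ioc_eq_sum_Icc (by omega), ← Icc_add_one_left_eq_Ioc, ih,
      ← add_sum_Ioc_eq_sum_Icc (show p + 1 ≤ N by omega), ← Icc_add_one_left_eq_Ioc]
    simp only [moveToFront, if_pos hpk]
    ring

theorem tailProdInv_moveToFront (hkN : k ≤ N) :
    tailProdInv N (moveToFront x k) =
      (∏ p ∈ Ioc 0 k, (x 1 + ∑ i ∈ Icc (p + 1) N, x i)⁻¹) *
        ∏ p ∈ Ioc k N, (∑ i ∈ Icc p N, x i)⁻¹ := by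
  rw [tailProdInv, show Icc 1 N = Ioc 0 N from Icc_add_one_left_eq_Ioc 0 N,
    ← prod_Ioc_consecutive _ k.zero_le hkN]
  congr 1 <;> refine prod_congr rfl fun p hp => ?_ <;> have := mem_Ioc.1 hp
  · rw [sum_Icc_moveToFront_of_le x this.2 hkN]
  · rw [sum_Icc_moveToFront_of_lt x this.1]

end MoveToFront

theorem sum_tailProdInv_moveToFront_general {K : Type*} [Field K] (N : ℕ) (x : ℕ → K)
    (hx1 : x 1 ≠ 0)
    (htail : ∀ p ∈ Finset.Icc 1 N, ∑ i ∈ Finset.Icc p N, x i ≠ 0)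
    (hmix : ∀ p ∈ Finset.Icc 2 N, x 1 + ∑ i ∈ Finset.Icc p N, x i ≠ 0) :
    ∑ k ∈ Finset.Icc 1 N, tailProdInv N (moveToFront x k) =
      tailProdInv N x * (∑ i ∈ Finset.Icc 1 N, x i) / x 1 := by
  have hIcc : Icc 1 N = Ioc 0 N := Icc_add_one_left_eq_Ioc 0 N
  have hT_end : ∑ i ∈ Icc (N + 1) N, x i = 0 := by rw [Icc_eq_empty_of_lt N.lt_add_one, sum_empty]
  have hmix' : ∀ p ∈ Ioc 0 N, x 1 + ∑ i ∈ Icc (p + 1) N, x i ≠ 0 := by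
    intro p hp
    obtain ⟨hp0, hpN⟩ := mem_Ioc.1 hp
    obtain hpN | rfl := hpN.lt_or_eq
    · exact hmix (p + 1) (mem_Icc.2 ⟨by omega, hpN⟩)
    · rwa [hT_end, add_zero]
  have key := mul_sum_prod_inv_add_succ_mul_prod_inv (x 1) (fun p => ∑ i ∈ Icc p N, x i) N
    (hIcc ▸ htail) hmix'
  rw [hT_end, zero_mul, sub_zero] at key
  rw [eq_div_iff hx1, mul_comm, hIcc,
    sum_congr rfl fun k hk => tailProdInv_moveToFront x (mem_Ioc.1 hk).2, key, tailProdInv, hIcc,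
    mul_comm]

/-- The identity `∑_{k=1}^{N} f(c_k(x)) = f(x_1,…,x_N) · (∑_{i=1}^{N} x_i) / x_1`. -/
theorem sum_tailProdInv_moveToFront {K : Type*} [Field K] (N : ℕ) (hN : 1 ≤ N) (x : ℕ → K)
    (hx1 : x 1 ≠ 0)
    (htail : ∀ p ∈ Finset.Icc 1 N, ∑ i ∈ Finset.Icc p N, x i ≠ 0)
    (hmix : ∀ p ∈ Finset.Icc 2 N, x 1 + ∑ i ∈ Finset.Icc p N, x i ≠ 0) :
    ∑ k ∈ Finset.Icc 1 N, tailProdInv N (moveToFront x k) =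
      tailProdInv N x * (∑ i ∈ Finset.Icc 1 N, x i) / x 1 :=
  sum_tailProdInv_moveToFront_general N x hx1 htail hmix
end
end

section
/- The vector q = ∑_{C∈𝒞} q_C · e_C satisfies K q = (∑_{F∈𝒻} w_F) · q; that is, q is an eigenvector of the BHR transition operator with eigenvalue equal to the total weight λ_W = ∑_{F∈𝒻} w_F. -/
/-!
Write `T(x₁, …, xₘ) = ∏ₚ (xₚ + ⋯ + xₘ)⁻¹`, so that `q = ∑_σ T(w_{F_{σ 1}}, …, w_{F_{σ N}}) e_{Π σ}`
with `Π σ = F_{σ 1} ∘ ⋯ ∘ F_{σ N}`; this product is a chamber as soon as some chamber exists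
(otherwise the module is zero). Applying `K` produces the terms `w_F · T(τ) e_{F ∘ Π τ}`. Pair
`(F, τ)` with the ordering `σ` obtained by moving `F` to the front of `τ`: conversely `τ` is `σ`
with its first face reinserted at some position `k`, and `F ∘ Π τ = Π σ` because
`F ∘ x ∘ F = F ∘ x`. The coefficient of `e_{Π σ}` in `K q` is therefore
`∑ₖ a · T(xs with a inserted at position k)`, where `a = w_{F_{σ 1}}` and `xs` lists the
remaining weights, and induction on `xs` shows that this equals
`T(xs) = (a + ∑ xs) · T(a :: xs) = λ_W · T(σ)`.
-/

open Finset
open scoped Classical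

noncomputable section

def faceMul {ι : Type*} (σ τ : ι → SignType) : ι → SignType :=
  fun i => if σ i = 0 then τ i else σ i

variable {ℓ : ℕ} {ι : Type*} [Fintype ι]

def IsFace (f : ι → ((Fin ℓ → ℝ) →ₗ[ℝ] ℝ)) (σ : ι → SignType) : Prop :=
  {x : Fin ℓ → ℝ | ∀ i, SignType.sign (f i x) = σ i}.Nonempty

def IsChamber (f : ι → ((Fin ℓ → ℝ) →ₗ[ℝ] ℝ)) (σ : ι → SignType) : Prop :=
  IsFace f σ ∧ ∀ i, σ i ≠ 0

variable (f : ι → ((Fin ℓ → ℝ) →ₗ[ℝ] ℝ))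

def Faces := {σ : ι → SignType // IsFace f σ}

def Chambers := {σ : ι → SignType // IsChamber f σ}

instance : Fintype (Faces f) := Subtype.fintype _
instance : Fintype (Chambers f) := Subtype.fintype _

variable (R : Type*) [CommRing R]

/-- The basis vector of the free module on chambers indexed by a sign vector:
`e σ = single σ 1` when `σ` is a chamber (and junk `0` otherwise). -/
def eC (σ : ι → SignType) : Chambers f →₀ R :=
  if h : IsChamber f σ then Finsupp.single ⟨σ, h⟩ 1 else 0

/-- The linear action of a face `σ` on the free module on chambers: `e C ↦ e (σ∘C)`. -/
def faceAct (σ : ι → SignType) : (Chambers f →₀ R) →ₗ[R] (Chambers f →₀ R) :=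
  Finsupp.lsum R fun C => LinearMap.toSpanSingleton R _ (eC f R (faceMul σ C.1))

/-- The BHR transition operator `K(e C) = ∑_F w_F • e (F∘C)`. -/
def transOp (w : Faces f → R) : (Chambers f →₀ R) →ₗ[R] (Chambers f →₀ R) :=
  Finsupp.lsum R fun C =>
    LinearMap.toSpanSingleton R _ (∑ F : Faces f, w F • eC f R (faceMul F.1 C.1))

/-- The field of rational functions in the weight indeterminates `w_F`. -/
abbrev RatW := FractionRing (MvPolynomial (Faces f) ℝ)

/-- The weights as indeterminates in the field of rational functions. -/
def wt : Faces f → RatW f :=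
  fun F => algebraMap (MvPolynomial (Faces f) ℝ) (RatW f) (MvPolynomial.X F)

/-- The condition that the iterated face product `F_{σ(1)} ∘ ⋯ ∘ F_{σ(N)}` equals `C`. -/
def prodCond {N : ℕ} (en : Fin N ≃ Faces f) (σ : Equiv.Perm (Fin N)) (C : ι → SignType) : Prop :=
  (List.ofFn fun p => (en (σ p)).1).foldr faceMul 0 = C


/-- The coordinate `q_C = ∑_σ ∏_{p=1}^N (∑_{i=p}^N w_{F_{σ(i)}})⁻¹`, the sum being over all
permutations `σ` whose iterated face product equals `C`. -/
def qCoord {R : Type*} [Field R] {N : ℕ} (en : Fin N ≃ Faces f) (w : Faces f → R)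
    (C : ι → SignType) : R :=
  ∑ σ ∈ univ.filter (fun σ : Equiv.Perm (Fin N) => prodCond f en σ C),
    ∏ p : Fin N, (∑ i ∈ Finset.Ici p, w (en (σ i)))⁻¹


section FaceProduct

variable {ι : Type*}

lemma foldr_faceMul_insertIdx_apply_of_eq_zero {a : ι → SignType} {i : ι} (ha : a i = 0) :
    ∀ (k : ℕ) (l : List (ι → SignType)) (x : ι → SignType), k ≤ l.length →
      (l.insertIdx k a).foldr faceMul x i = l.foldr faceMul x i
  | 0, l, x, _ => by simp [faceMul, ha]
  | _ + 1, [], _, hk => by simp at hk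
  | k + 1, b :: l, x, hk => by
    simp only [List.insertIdx_succ_cons, List.foldr_cons, faceMul,
      foldr_faceMul_insertIdx_apply_of_eq_zero ha k l x (by simpa using hk)]

lemma faceMul_foldr_insertIdx (a : ι → SignType) {k : ℕ} {l : List (ι → SignType)}
    (hk : k ≤ l.length) :
    faceMul a ((l.insertIdx k a).foldr faceMul 0) = faceMul a (l.foldr faceMul 0) := by
  funext i
  by_cases ha : a i = 0
  · simp only [faceMul, ha, if_true, foldr_faceMul_insertIdx_apply_of_eq_zero ha k l 0 hk]
  · simp only [faceMul, ha, if_false]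

lemma foldr_faceMul_apply_ne_zero {l : List (ι → SignType)} {a : ι → SignType} (ha : a ∈ l)
    {i : ι} (hai : a i ≠ 0) (x : ι → SignType) : l.foldr faceMul x i ≠ 0 := by
  induction l with
  | nil => simp at ha
  | cons b l ih =>
    simp only [List.foldr_cons, faceMul]
    split_ifs with hb
    · obtain rfl | ha := List.mem_cons.mp ha
      · exact absurd hb hai
      · exact ih ha
    · exact hb

end FaceProduct

lemma List.ofFn_insertNth {α : Type*} {n : ℕ} (k : Fin (n + 1)) (a : α) (x : Fin n → α) :
    List.ofFn (k.insertNth a x) = (List.ofFn x).insertIdx k a := by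
  induction n with
  | zero => rw [Fin.fin_one_eq_zero k, Fin.insertNth_zero']; simp
  | succ n ih =>
    cases k using Fin.cases with
    | zero => simp [Fin.insertNth_zero']
    | succ k =>
      rw [← Fin.cons_self_tail x, Fin.insertNth_succ_cons, List.ofFn_cons, List.ofFn_cons,
        Fin.val_succ, List.insertIdx_succ_cons, ih]

lemma List.ofFn_cycleRange {α : Type*} {n : ℕ} (g : Fin (n + 1) → α) (k : Fin (n + 1)) :
    List.ofFn (fun i => g (Fin.cycleRange k i)) =
      (List.ofFn fun i => g i.succ).insertIdx k (g 0) := by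
  rw [← List.ofFn_insertNth, ← Fin.cons_comp_cycleRange]
  exact congrArg List.ofFn (congrArg (· ∘ _) (Fin.cons_self_tail g).symm)

section Faces

open Filter Topology

variable {ℓ : ℕ} {ι : Type*} {f : ι → ((Fin ℓ → ℝ) →ₗ[ℝ] ℝ)}

lemma isFace_zero : IsFace f 0 :=
  ⟨0, fun i => by simp⟩

/-- If `x` realizes `σ` and `y` realizes `τ`, then `x + ε • y` realizes `σ ∘ τ` for small
`ε > 0`. -/
lemma isFace_faceMul [Finite ι] {σ τ : ι → SignType} (hσ : IsFace f σ) (hτ : IsFace f τ) :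
    IsFace f (faceMul σ τ) := by
  obtain ⟨x, hx⟩ := hσ
  obtain ⟨y, hy⟩ := hτ
  have key : ∀ i, ∀ᶠ ε : ℝ in 𝓝[>] 0, SignType.sign (f i (x + ε • y)) = faceMul σ τ i := by
    intro i
    simp only [map_add, map_smul, smul_eq_mul, faceMul, ← hx i, ← hy i]
    split_ifs with h
    · filter_upwards [self_mem_nhdsWithin] with ε (hε : 0 < ε)
      rw [sign_eq_zero_iff.mp h, zero_add, sign_mul, sign_pos hε, one_mul]
    · have hcont : ContinuousAt (fun ε : ℝ => SignType.sign (f i x + ε * f i y)) 0 :=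
        (continuousAt_sign_of_ne_zero (by simpa using h)).comp (by fun_prop)
      refine nhdsWithin_le_nhds (tendsto_pure.mp ?_)
      simpa [nhds_discrete] using hcont.tendsto
  obtain ⟨ε, hε⟩ := (eventually_all.mpr key).exists
  exact ⟨x + ε • y, hε⟩

lemma isFace_foldr_faceMul [Finite ι] {l : List (ι → SignType)} (hl : ∀ a ∈ l, IsFace f a) :
    IsFace f (l.foldr faceMul 0) := by
  induction l with
  | nil => exact isFace_zero
  | cons a l ih =>
    exact isFace_faceMul (hl a List.mem_cons_self) (ih fun b hb => hl b (List.mem_cons_of_mem a hb))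

end Faces

section TailSums

variable {K : Type*} [Field K]

def prodInvTailSums : List K → K
  | [] => 1
  | y :: ys => (y + ys.sum)⁻¹ * prodInvTailSums ys

lemma prod_inv_sum_Ici_eq_prodInvTailSums {n : ℕ} (g : Fin n → K) :
    ∏ p, (∑ i ∈ Ici p, g i)⁻¹ = prodInvTailSums (List.ofFn g) := by
  induction n with
  | zero => simp [prodInvTailSums]
  | succ n ih =>
    rw [Fin.prod_univ_succ, List.ofFn_succ, prodInvTailSums, ← ih, List.sum_ofFn,
      ← Fin.sum_univ_succ]
    simp [Fin.sum_Ici_succ]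

lemma sum_mul_prodInvTailSums_insertIdx (a : K) (xs : List K)
    (h : ∀ s, s.Sublist (a :: xs) → s ≠ [] → s.sum ≠ 0) :
    ∑ k ∈ range (xs.length + 1), a * prodInvTailSums (xs.insertIdx k a) = prodInvTailSums xs := by
  induction xs with
  | nil =>
    have ha : a ≠ 0 := by simpa using h [a] (List.Sublist.refl _) (List.cons_ne_nil _ _)
    simp [prodInvTailSums, ha]
  | cons x xs ih =>
    have ih := ih fun s hs => h s (hs.trans ((List.sublist_cons_self x xs).cons_cons a))
    have hx : x + xs.sum ≠ 0 := by
      simpa using h (x :: xs) (List.sublist_cons_self _ _) (List.cons_ne_nil _ _)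
    have hax : a + (x + xs.sum) ≠ 0 := by
      simpa using h _ (List.Sublist.refl _) (List.cons_ne_nil _ _)
    have hsum : ∀ k ∈ range (xs.length + 1), (xs.insertIdx k a).sum = a + xs.sum := fun k hk =>
      ((List.perm_insertIdx a xs (Nat.lt_succ_iff.mp (mem_range.mp hk))).sum_eq).trans
        (List.sum_cons)
    calc ∑ k ∈ range ((x :: xs).length + 1), a * prodInvTailSums ((x :: xs).insertIdx k a)
        = (a + (x + xs.sum))⁻¹ *
            ∑ k ∈ range (xs.length + 1), a * prodInvTailSums (xs.insertIdx k a) +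
          a * ((a + (x + xs.sum))⁻¹ * prodInvTailSums (x :: xs)) := by
          rw [List.length_cons, sum_range_succ', mul_sum]
          congr 1
          refine sum_congr rfl fun k hk => ?_
          rw [List.insertIdx_succ_cons, prodInvTailSums, hsum k hk]
          ring
      _ = prodInvTailSums (x :: xs) := by
          -- with `t = x + xs.sum`: `(a + t)⁻¹ * (a / t + 1) = t⁻¹`
          rw [ih, prodInvTailSums]
          field_simp
          ring

lemma sum_mul_prod_inv_sum_Ici_cycleRange {n : ℕ} (c : Fin (n + 1) → K)
    (hc : ∀ s, s.Sublist (List.ofFn c) → s ≠ [] → s.sum ≠ 0) :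
    ∑ k, c 0 * ∏ p, (∑ i ∈ Ici p, c (Fin.cycleRange k i))⁻¹ =
      (∑ i, c i) * ∏ p, (∑ i ∈ Ici p, c i)⁻¹ := by
  rw [List.ofFn_succ] at hc
  have hinsert := sum_mul_prodInvTailSums_insertIdx (c 0) _ hc
  have htotal : ∑ i, c i ≠ 0 := by
    simpa [List.sum_ofFn, Fin.sum_univ_succ] using hc _ (List.Sublist.refl _) (List.cons_ne_nil _ _)
  rw [List.length_ofFn, ← Fin.sum_univ_eq_sum_range] at hinsert
  simp only [prod_inv_sum_Ici_eq_prodInvTailSums, List.ofFn_cycleRange, hinsert]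
  rw [List.ofFn_succ, prodInvTailSums, List.sum_ofFn, ← Fin.sum_univ_succ,
    mul_inv_cancel_left₀ htotal]

end TailSums

lemma Equiv.Perm.sum_sum_eq_sum_sum_mul_cycleRange {M : Type*} [AddCommMonoid M] {n : ℕ}
    (g : Fin (n + 1) → Equiv.Perm (Fin (n + 1)) → M) :
    ∑ τ, ∑ j, g j τ = ∑ σ, ∑ k, g (σ 0) (σ * Fin.cycleRange k) := by
  let e : Equiv.Perm (Fin (n + 1)) × Fin (n + 1) → Equiv.Perm (Fin (n + 1)) × Fin (n + 1) :=
    fun x => (x.1 * Fin.cycleRange x.2, x.1 0)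
  have he : Function.Injective e := by
    rintro ⟨σ, k⟩ ⟨σ', k'⟩ h
    simp only [e, Prod.mk.injEq] at h
    obtain ⟨hmul, h0⟩ := h
    have hk : k = k' := by
      apply (σ * Fin.cycleRange k).injective
      rw [Equiv.Perm.mul_apply, Fin.cycleRange_self, hmul, Equiv.Perm.mul_apply,
        Fin.cycleRange_self, h0]
    subst hk
    rw [mul_right_cancel hmul]
  rw [← Fintype.sum_prod_type', ← Fintype.sum_prod_type']
  exact (Fintype.sum_bijective e (Finite.injective_iff_bijective.mp he) _ _ fun _ => rfl).symm

section Permutations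

variable {ℓ : ℕ} {ι : Type*} {f : ι → ((Fin ℓ → ℝ) →ₗ[ℝ] ℝ)} {N : ℕ}

def permProd (en : Fin N ≃ Faces f) (σ : Equiv.Perm (Fin N)) : ι → SignType :=
  (List.ofFn fun p => (en (σ p)).1).foldr faceMul 0

/-- Some chamber occurs among the factors, so no coordinate of the product vanishes. -/
lemma isChamber_permProd [Finite ι] [Nonempty (Chambers f)] (en : Fin N ≃ Faces f)
    (σ : Equiv.Perm (Fin N)) : IsChamber f (permProd en σ) := by
  obtain ⟨⟨C, hCface, hCne⟩⟩ := ‹Nonempty (Chambers f)›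
  have hC : C ∈ List.ofFn fun p => (en (σ p)).1 :=
    List.mem_ofFn.mpr ⟨σ.symm (en.symm ⟨C, hCface⟩), by
      rw [σ.apply_symm_apply]; exact congrArg Subtype.val (en.apply_symm_apply _)⟩
  refine ⟨isFace_foldr_faceMul fun a ha => ?_, fun i => foldr_faceMul_apply_ne_zero hC (hCne i) 0⟩
  obtain ⟨p, rfl⟩ := List.mem_ofFn.mp ha
  exact (en (σ p)).2

lemma faceMul_permProd_mul_cycleRange {n : ℕ} (en : Fin (n + 1) ≃ Faces f)
    (σ : Equiv.Perm (Fin (n + 1))) (k : Fin (n + 1)) :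
    faceMul (en (σ 0)).1 (permProd en (σ * Fin.cycleRange k)) = permProd en σ := by
  have hl := List.ofFn_cycleRange (fun p => (en (σ p)).1) k
  beta_reduce at hl
  simp only [permProd, Equiv.Perm.mul_apply, hl]
  rw [List.ofFn_succ (n := n), List.foldr_cons]
  exact faceMul_foldr_insertIdx _ (by simp [k.is_le])

end Permutations

lemma sum_ne_zero_of_sublist_map {α K : Type*} [Field K] {w : α → K}
    (hw : ∀ S : Finset α, S.Nonempty → ∑ a ∈ S, w a ≠ 0) {L : List α} (hL : L.Nodup)
    {s : List K} (hs : s.Sublist (L.map w)) (hne : s ≠ []) : s.sum ≠ 0 := by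
  obtain ⟨s', hs', rfl⟩ := List.sublist_map_iff.mp hs
  rw [← List.sum_toFinset w (hs'.nodup hL)]
  exact hw _ (List.toFinset_nonempty_iff _ |>.mpr (by simpa using hne))

section Weights

variable {ℓ : ℕ} {ι : Type*} [Fintype ι] {f : ι → ((Fin ℓ → ℝ) →ₗ[ℝ] ℝ)} {N : ℕ}
  {K : Type*} [Field K]

def permWeight (en : Fin N ≃ Faces f) (w : Faces f → K) (σ : Equiv.Perm (Fin N)) : K :=
  ∏ p : Fin N, (∑ i ∈ Ici p, w (en (σ i)))⁻¹

lemma sum_mul_permWeight_mul_cycleRange {w : Faces f → K}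
    (hw : ∀ S : Finset (Faces f), S.Nonempty → ∑ F ∈ S, w F ≠ 0) {n : ℕ}
    (en : Fin (n + 1) ≃ Faces f) (σ : Equiv.Perm (Fin (n + 1))) :
    ∑ k, w (en (σ 0)) * permWeight en w (σ * Fin.cycleRange k) =
      (∑ F, w F) * permWeight en w σ := by
  have hc : ∀ s, s.Sublist (List.ofFn fun i => w (en (σ i))) → s ≠ [] → s.sum ≠ 0 := by
    intro s hs hne
    refine sum_ne_zero_of_sublist_map hw (L := List.ofFn fun i => en (σ i)) ?_ ?_ hne
    · exact List.nodup_ofFn.mpr (en.injective.comp σ.injective)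
    · rwa [List.map_ofFn]
  rw [← Equiv.sum_comp (σ.trans en) w]
  exact sum_mul_prod_inv_sum_Ici_cycleRange (fun i => w (en (σ i))) hc

end Weights

section Eigenvector

variable {ℓ : ℕ} {ι : Type*} {f : ι → ((Fin ℓ → ℝ) →ₗ[ℝ] ℝ)}

lemma eC_of_isChamber {R : Type*} [CommRing R] {σ : ι → SignType} (hσ : IsChamber f σ) :
    eC f R σ = Finsupp.single (⟨σ, hσ⟩ : Chambers f) 1 :=
  dif_pos hσ

variable [Fintype ι]

lemma transOp_single {R : Type*} [CommRing R] (w : Faces f → R) (C : Chambers f) (r : R) :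
    transOp f R w (Finsupp.single C r) = r • ∑ F, w F • eC f R (faceMul F.1 C.1) := by
  rw [transOp, Finsupp.lsum_single, LinearMap.toSpanSingleton_apply]

lemma transOp_eC {R : Type*} [CommRing R] (w : Faces f → R) {σ : ι → SignType}
    (hσ : IsChamber f σ) :
    transOp f R w (eC f R σ) = ∑ F, w F • eC f R (faceMul F.1 σ) := by
  rw [eC_of_isChamber hσ]
  exact (transOp_single w _ 1).trans (one_smul _ _)

variable {K : Type*} [Field K] {N : ℕ}

lemma sum_single_qCoord [Nonempty (Chambers f)] (en : Fin N ≃ Faces f) (w : Faces f → K) :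
    ∑ C : Chambers f, Finsupp.single C (qCoord f en w C.1) =
      ∑ σ, permWeight en w σ • eC f K (permProd en σ) := by
  let chamberOf (σ : Equiv.Perm (Fin N)) : Chambers f := ⟨permProd en σ, isChamber_permProd en σ⟩
  have hfilter : ∀ C : Chambers f, univ.filter (fun σ => prodCond f en σ C.1) =
      univ.filter (fun σ => chamberOf σ = C) := fun C =>
    filter_congr fun σ _ => ⟨fun h => Subtype.ext h, fun h => congrArg Subtype.val h⟩
  simp only [qCoord, hfilter, Finsupp.single_finsetSum]
  rw [← sum_fiberwise univ chamberOf]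
  refine sum_congr rfl fun C _ => sum_congr rfl fun σ hσ => ?_
  obtain rfl := (mem_filter.mp hσ).2
  rw [eC_of_isChamber (isChamber_permProd en σ)]
  exact (Finsupp.smul_single_one _ _).symm

theorem transOp_sum_single_qCoord [Nonempty (Chambers f)] {w : Faces f → K}
    (hw : ∀ S : Finset (Faces f), S.Nonempty → ∑ F ∈ S, w F ≠ 0) (en : Fin N ≃ Faces f) :
    transOp f K w (∑ C : Chambers f, Finsupp.single C (qCoord f en w C.1)) =
      (∑ F, w F) • ∑ C : Chambers f, Finsupp.single C (qCoord f en w C.1) := by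
  obtain ⟨n, rfl⟩ : ∃ n, N = n + 1 :=
    Nat.exists_eq_add_one_of_ne_zero (en.symm ⟨0, isFace_zero⟩).pos.ne'
  rw [sum_single_qCoord]
  calc transOp f K w (∑ σ, permWeight en w σ • eC f K (permProd en σ))
      = ∑ σ, ∑ j, (w (en j) * permWeight en w σ) • eC f K (faceMul (en j).1 (permProd en σ)) := by
        simp only [map_sum, map_smul, transOp_eC w (isChamber_permProd en _), smul_sum,
          smul_smul, mul_comm (permWeight en w _)]
        exact sum_congr rfl fun σ _ => (Equiv.sum_comp en _).symm
    _ = ∑ σ, ∑ k, (w (en (σ 0)) * permWeight en w (σ * Fin.cycleRange k)) •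
          eC f K (faceMul (en (σ 0)).1 (permProd en (σ * Fin.cycleRange k))) := by
        rw [Equiv.Perm.sum_sum_eq_sum_sum_mul_cycleRange]
    _ = (∑ F, w F) • ∑ σ, permWeight en w σ • eC f K (permProd en σ) := by
        simp only [faceMul_permProd_mul_cycleRange, ← sum_smul,
          sum_mul_permWeight_mul_cycleRange hw]
        rw [smul_sum]
        simp only [mul_smul]

end Eigenvector

lemma sum_wt_ne_zero {ℓ : ℕ} {ι : Type*} [Fintype ι] {f : ι → ((Fin ℓ → ℝ) →ₗ[ℝ] ℝ)}
    {S : Finset (Faces f)} (hS : S.Nonempty) : ∑ F ∈ S, wt f F ≠ 0 := by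
  have hX : ∑ F ∈ S, MvPolynomial.X F ≠ (0 : MvPolynomial (Faces f) ℝ) := fun h => by
    simpa [hS.ne_empty] using congrArg (MvPolynomial.eval fun _ => (1 : ℝ)) h
  simpa only [wt, ← map_sum] using
    (map_ne_zero_iff _ (IsFractionRing.injective (MvPolynomial (Faces f) ℝ) (RatW f))).mpr hX

theorem transOp_q_eq_totalWeight_smul_general {ℓ : ℕ} {ι : Type*} [Fintype ι]
    (f : ι → ((Fin ℓ → ℝ) →ₗ[ℝ] ℝ))
    (N : ℕ) (en : Fin N ≃ Faces f) :
    transOp f (RatW f) (wt f)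
        (∑ C : Chambers f, Finsupp.single C (qCoord f en (wt f) C.1)) =
      (∑ F : Faces f, wt f F) •
        (∑ C : Chambers f, Finsupp.single C (qCoord f en (wt f) C.1)) := by
  cases isEmpty_or_nonempty (Chambers f)
  · exact Subsingleton.elim _ _
  · exact transOp_sum_single_qCoord (fun _ => sum_wt_ne_zero) en

/-- The vector `q = ∑_C q_C • e_C` is an eigenvector of the BHR transition operator with
eigenvalue `λ_W = ∑_{F ∈ 𝒻} w_F`, over the field of rational functions in the weights. -/
theorem transOp_q_eq_totalWeight_smul {ℓ : ℕ} (hℓ : 1 ≤ ℓ) {ι : Type*} [Fintype ι] [Nonempty ι]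
    (f : ι → ((Fin ℓ → ℝ) →ₗ[ℝ] ℝ)) (hf : ∀ i, f i ≠ 0)
    (hess : (⨅ i, LinearMap.ker (f i)) = ⊥)
    (N : ℕ) (en : Fin N ≃ Faces f) :
    transOp f (RatW f) (wt f)
        (∑ C : Chambers f, Finsupp.single C (qCoord f en (wt f) C.1)) =
      (∑ F : Faces f, wt f F) •
        (∑ C : Chambers f, Finsupp.single C (qCoord f en (wt f) C.1)) :=
  transOp_q_eq_totalWeight_smul_general f N en

end
end

section
/- (Varchenko–Gelfand) P_ℓ is the full space of functions 𝒞 → ℝ; that is, every real-valued function on the set of chambers is an ℝ-linear combination of the Heaviside monomials x_I, I ⊆ ι. -/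
open Finset
open scoped Classical

noncomputable section

variable {ℓ : ℕ} {ι : Type*} [Fintype ι]

variable (f : ι → ((Fin ℓ → ℝ) →ₗ[ℝ] ℝ))

/-- The Heaviside function of the hyperplane `H_i`: value `1` on chambers on the positive
side of `H_i`, value `0` otherwise. -/
def heav (i : ι) : Chambers f → ℝ := fun C => if C.1 i = 1 then 1 else 0

/-- The Heaviside monomial `x_I = ∏_{i ∈ I} x_i`. -/
def heavMon (I : Finset ι) : Chambers f → ℝ := fun C => ∏ i ∈ I, heav f i C

/-- The degree filtration `P_p`: the span of the Heaviside monomials of degree at most `p`. -/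
def Pfil (p : ℕ) : Submodule ℝ (Chambers f → ℝ) :=
  Submodule.span ℝ {g | ∃ I : Finset ι, I.card ≤ p ∧ g = heavMon f I}

/-!
The indicator functions of chambers span all functions on `𝒞`, and the indicator of `C` is
`∏_{C_i = +} x_i * ∏_{C_i = -} (1 - x_i)`, which expands into Heaviside monomials.
It remains to lower degrees. If `|I| > ℓ`, the `f i` with `i ∈ I` satisfy a nontrivial relation
`∑ a_i f_i = 0`. No chamber lies on the positive side of every `H_i` with `a_i ≥ 0` and on the
negative side of every `H_i` with `a_i < 0`, since `∑ a_i f_i` would be positive there; hence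
`∏_{a_i ≥ 0} x_i * ∏_{a_i < 0} (1 - x_i) = 0`, and expanding this product writes `x_I` as a
combination of monomials `x_J` with `J ⊊ I`.
-/

section Expansion

variable {α R : Type*} [CommRing R] (x : α → R)

theorem Finset.prod_mul_prod_one_sub_eq_sum {A N : Finset α} (h : Disjoint A N) :
    (∏ i ∈ A, x i) * ∏ i ∈ N, (1 - x i) =
      ∑ T ∈ N.powerset, (-1 : ℤ) ^ T.card • ∏ i ∈ A ∪ T, x i := by
  have hN : ∏ i ∈ N, (1 - x i) = ∑ T ∈ N.powerset, (-1 : ℤ) ^ T.card • ∏ i ∈ T, x i := by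
    simpa [sub_eq_neg_add, Finset.prod_neg, zsmul_eq_mul] using
      Finset.prod_add (fun i => -x i) (fun _ => 1) N
  rw [hN, Finset.mul_sum]
  refine Finset.sum_congr rfl fun T hT => ?_
  rw [Finset.prod_union (h.mono_right (Finset.mem_powerset.1 hT)), mul_smul_comm]

variable {K : Type*} [Ring K] [Module K R]

theorem Finset.prod_mul_prod_one_sub_mem_span {A N : Finset α} (h : Disjoint A N) :
    (∏ i ∈ A, x i) * ∏ i ∈ N, (1 - x i) ∈
      Submodule.span K (Set.range fun J : Finset α => ∏ i ∈ J, x i) := by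
  rw [Finset.prod_mul_prod_one_sub_eq_sum x h]
  exact Submodule.sum_mem _ fun T _ =>
    zsmul_mem (Submodule.subset_span (Set.mem_range_self (A ∪ T))) _

theorem Finset.prod_union_mem_span_of_prod_mul_prod_one_sub_eq_zero {A N : Finset α}
    (h : Disjoint A N) (h0 : (∏ i ∈ A, x i) * ∏ i ∈ N, (1 - x i) = 0) :
    ∏ i ∈ A ∪ N, x i ∈
      Submodule.span K ((fun J : Finset α => ∏ i ∈ J, x i) '' {J | J ⊂ A ∪ N}) := by
  rw [Finset.prod_mul_prod_one_sub_eq_sum x h,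
    ← Finset.add_sum_erase _ _ (Finset.mem_powerset_self N)] at h0
  have hx : ∏ i ∈ A ∪ N, x i = (-1 : ℤ) ^ N.card •
      -∑ T ∈ N.powerset.erase N, (-1 : ℤ) ^ T.card • ∏ i ∈ A ∪ T, x i := by
    rw [← eq_neg_of_add_eq_zero_left h0, smul_smul, ← mul_pow, neg_one_mul, neg_neg, one_pow,
      one_smul]
  rw [hx]
  refine zsmul_mem (neg_mem (Submodule.sum_mem _ fun T hT =>
    zsmul_mem (Submodule.subset_span (Set.mem_image_of_mem _ ?_)) _)) _
  obtain ⟨hTN, hTsub⟩ := Finset.mem_erase.1 hT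
  obtain ⟨n, hnN, hnT⟩ := Finset.exists_of_ssubset
    (Finset.ssubset_iff_subset_ne.2 ⟨Finset.mem_powerset.1 hTsub, hTN⟩)
  refine Finset.ssubset_iff_of_subset
    (Finset.union_subset_union le_rfl (Finset.mem_powerset.1 hTsub)) |>.2 ⟨n, ?_, ?_⟩
  · exact Finset.mem_union_right _ hnN
  · simp [hnT, Finset.disjoint_right.1 h hnN]

end Expansion

theorem Finset.exists_nontrivial_relation_of_finrank_lt_card {α R M : Type*} [Ring R]
    [StrongRankCondition R] [AddCommGroup M] [Module R M] [Module.Finite R M] (I : Finset α)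
    (v : α → M) (h : Module.finrank R M < I.card) :
    ∃ a : α → R, ∑ i ∈ I, a i • v i = 0 ∧ ∃ i ∈ I, a i ≠ 0 :=
  not_linearIndepOn_finset_iff.1 fun hI => h.not_ge (by simpa using hI.fintype_card_le_finrank)

section Chambers

variable {ℓ : ℕ} {ι : Type*} (f : ι → ((Fin ℓ → ℝ) →ₗ[ℝ] ℝ))

theorem heavMon_eq_prod (I : Finset ι) : heavMon f I = ∏ i ∈ I, heav f i := by
  ext C
  simp [heavMon, Finset.prod_apply]

variable {f}

theorem ite_heav_eq_ite (C D : Chambers f) (i : ι) :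
    (if C.1 i = 1 then heav f i D else 1 - heav f i D) = if D.1 i = C.1 i then 1 else 0 := by
  have hC := C.2.2 i
  have hD := D.2.2 i
  cases hCi : C.1 i <;> cases hDi : D.1 i <;> simp_all [heav]

theorem single_one_eq_prod_heav_mul_prod_one_sub_heav [Fintype ι] (C : Chambers f) :
    Pi.single C 1 = (∏ i with C.1 i = 1, heav f i) * ∏ i with C.1 i ≠ 1, (1 - heav f i) := by
  ext D
  simp only [Pi.mul_apply, Finset.prod_apply, Pi.sub_apply, Pi.one_apply, ← Finset.prod_ite,
    ite_heav_eq_ite, Fintype.prod_boole, Pi.single_apply]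
  exact if_congr (Subtype.ext_iff.trans funext_iff) rfl rfl

variable {C : Chambers f} {x : Fin ℓ → ℝ}

theorem heav_apply_of_sign_eq (hx : ∀ i, SignType.sign (f i x) = C.1 i) (i : ι) :
    heav f i C = if 0 < f i x then 1 else 0 := by
  simp [heav, ← hx i, sign_eq_one_iff]

theorem one_sub_heav_apply_of_sign_eq (hx : ∀ i, SignType.sign (f i x) = C.1 i) (i : ι) :
    1 - heav f i C = if f i x < 0 then 1 else 0 := by
  have hne : f i x ≠ 0 := sign_ne_zero.1 (hx i ▸ C.2.2 i)
  rcases hne.lt_or_gt with hlt | hgt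
  · simp [heav_apply_of_sign_eq hx, hlt, hlt.not_gt]
  · simp [heav_apply_of_sign_eq hx, hgt, hgt.not_gt]

theorem prod_heav_mul_prod_one_sub_heav_eq_zero {I : Finset ι} {a : ι → ℝ}
    (ha : ∑ i ∈ I, a i • f i = 0) (hne : ∃ i ∈ I, a i ≠ 0) :
    (∏ i ∈ I with 0 ≤ a i, heav f i) * ∏ i ∈ I with a i < 0, (1 - heav f i) = 0 := by
  ext C
  obtain ⟨x, hx⟩ := C.2.1
  simp only [Pi.mul_apply, Finset.prod_apply, Pi.sub_apply, Pi.one_apply, Pi.zero_apply,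
    one_sub_heav_apply_of_sign_eq hx]
  simp only [heav_apply_of_sign_eq hx, Finset.prod_boole, Finset.mem_filter, and_imp]
  split_ifs with hpos hneg
  · have hterm : ∀ i ∈ I, a i ≠ 0 → 0 < a i * f i x := fun i hi hai =>
      hai.lt_or_gt.elim (fun hlt => mul_pos_of_neg_of_neg hlt (hneg i hi hlt))
        fun hgt => mul_pos hgt (hpos i hi hgt.le)
    have hsum : 0 < ∑ i ∈ I, a i * f i x := by
      obtain ⟨i₀, hi₀, hai₀⟩ := hne
      refine Finset.sum_pos' (fun i hi => ?_) ⟨i₀, hi₀, hterm i₀ hi₀ hai₀⟩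
      rcases eq_or_ne (a i) 0 with hai | hai
      · simp [hai]
      · exact (hterm i hi hai).le
    exact absurd (by simpa using LinearMap.congr_fun ha x) hsum.ne'
  all_goals simp

variable (f)

theorem heavMon_mem_Pfil (I : Finset ι) : heavMon f I ∈ Pfil f ℓ := by
  induction I using Finset.strongInduction with
  | H I ih =>
  by_cases hI : I.card ≤ ℓ
  · exact Submodule.subset_span ⟨I, hI, rfl⟩
  obtain ⟨a, ha, hne⟩ :=
    I.exists_nontrivial_relation_of_finrank_lt_card (R := ℝ) f (by simpa using not_le.1 hI)
  have hunion : (I.filter (0 ≤ a ·)) ∪ I.filter (a · < 0) = I := by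
    simpa only [not_le] using Finset.filter_union_filter_not_eq (0 ≤ a ·) I
  have hdisj : Disjoint (I.filter (0 ≤ a ·)) (I.filter (a · < 0)) :=
    Finset.disjoint_filter.2 fun _ _ h₁ h₂ => h₁.not_gt h₂
  have hmem := Finset.prod_union_mem_span_of_prod_mul_prod_one_sub_eq_zero (K := ℝ) (heav f)
    hdisj (prod_heav_mul_prod_one_sub_heav_eq_zero ha hne)
  rw [hunion, ← heavMon_eq_prod] at hmem
  refine Submodule.span_le.2 ?_ hmem
  rintro _ ⟨J, hJ, rfl⟩
  simpa only [heavMon_eq_prod, SetLike.mem_coe] using ih J hJ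

end Chambers

theorem Pfil_top_general {ℓ : ℕ} {ι : Type*} [Fintype ι]
    (f : ι → ((Fin ℓ → ℝ) →ₗ[ℝ] ℝ)) :
    Pfil f ℓ = ⊤ := by
  have hmon : Submodule.span ℝ (Set.range fun J : Finset ι => ∏ i ∈ J, heav f i) ≤ Pfil f ℓ :=
    Submodule.span_le.2 <| by
      rintro _ ⟨J, rfl⟩
      simpa only [heavMon_eq_prod, SetLike.mem_coe] using heavMon_mem_Pfil f J
  rw [eq_top_iff, ← (Pi.basisFun ℝ (Chambers f)).span_eq, Submodule.span_le]
  rintro _ ⟨C, rfl⟩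
  rw [Pi.basisFun_apply, single_one_eq_prod_heav_mul_prod_one_sub_heav]
  exact hmon (Finset.prod_mul_prod_one_sub_mem_span _ (Finset.disjoint_filter_filter_not _ _ _))

/-- (Varchenko–Gelfand) `P_ℓ` is the full space of functions on chambers: every real-valued
function on chambers is a linear combination of Heaviside monomials (of degree at most `ℓ`). -/
theorem Pfil_top {ℓ : ℕ} (hℓ : 1 ≤ ℓ) {ι : Type*} [Fintype ι] [Nonempty ι]
    (f : ι → ((Fin ℓ → ℝ) →ₗ[ℝ] ℝ)) (hf : ∀ i, f i ≠ 0)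
    (hess : (⨅ i, LinearMap.ker (f i)) = ⊥) :
    Pfil f ℓ = ⊤ :=
  Pfil_top_general f

end
end
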